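/- Binary addition is computable by a bounded-depth boolean circuit built from ReLU units: there exists a function of the form x ↦ W₂·relu(W₁·(a, b) + b₁) + b₂, with W₁ having at most 8d rows, mapping the binary (little-endian) d-bit representations a, b ∈ {0,1}^d of two non-negative integers m, n with m + n < 2^{d+1} to the binary representation of m + n in {0,1}^{d+1}. -/

import Mathlib

/-!
Digit `j` of `x + y` is `xⱼ + yⱼ + cⱼ - 2 cⱼ₊₁`, where `cₜ` is the carry into position `t`. The carry
is `1` exactly when the integer `z = (x mod 2ᵗ) + (y mod 2ᵗ) - 2ᵗ` is nonnegative, so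
`cₜ = relu (z + 1) - relu z`, and `z` is an affine function of the input digits. Since
`xⱼ + yⱼ ≥ 0` passes through a ReLU unchanged, `d` pass-through units and `2d` ramp units
(`3d ≤ 8d` in all) feed an output layer that only has to form these linear combinations.
-/

open scoped Matrix

/-- The `k`-th binary digit of `n`, as a real number. -/
noncomputable def binDigit (n k : ℕ) : ℝ := if Nat.testBit n k then 1 else 0

open Finset

lemma binDigit_nonneg (n k : ℕ) : 0 ≤ binDigit n k := by
  unfold binDigit; split <;> norm_num

lemma binDigit_eq_mod_two (n k : ℕ) : binDigit n k = ((n / 2 ^ k % 2 : ℕ) : ℝ) := by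
  rw [binDigit, Nat.testBit_eq_decide_div_mod_eq]
  rcases Nat.mod_two_eq_zero_or_one (n / 2 ^ k) with h | h <;> simp [h]

lemma binDigit_eq_zero_of_lt {n k : ℕ} (h : n < 2 ^ k) : binDigit n k = 0 := by
  simp [binDigit, Nat.testBit_eq_false_of_lt h]

lemma sum_binDigit_mul_pow (n j : ℕ) :
    ∑ k ∈ range j, binDigit n k * 2 ^ k = ((n % 2 ^ j : ℕ) : ℝ) := by
  induction j with
  | zero => simp [Nat.mod_one]
  | succ j ih =>
    rw [sum_range_succ, ih, binDigit_eq_mod_two, Nat.mod_pow_succ]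
    push_cast
    ring

/-- The carry into position `t` when adding `x` and `y` in binary. -/
def carry (x y t : ℕ) : ℕ := (x % 2 ^ t + y % 2 ^ t) / 2 ^ t

@[simp] lemma carry_zero (x y : ℕ) : carry x y 0 = 0 := by simp [carry, Nat.mod_one]

lemma carry_eq_zero_of_add_lt {x y t : ℕ} (h : x + y < 2 ^ t) : carry x y t = 0 := by
  rw [carry, Nat.mod_eq_of_lt (by omega : x < 2 ^ t), Nat.mod_eq_of_lt (by omega : y < 2 ^ t),
    Nat.div_eq_of_lt h]

lemma carry_eq_ite (x y t : ℕ) :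
    carry x y t = if 2 ^ t ≤ x % 2 ^ t + y % 2 ^ t then 1 else 0 := by
  have hp : 0 < 2 ^ t := Nat.two_pow_pos t
  have := Nat.mod_lt x hp
  have := Nat.mod_lt y hp
  split_ifs with h
  · exact Nat.div_eq_of_lt_le (by omega) (by omega)
  · exact Nat.div_eq_of_lt (by omega)

lemma binDigit_add (x y j : ℕ) :
    binDigit (x + y) j
      = binDigit x j + binDigit y j + carry x y j - 2 * carry x y (j + 1) := by
  have split_mod (t : ℕ) : (x + y) % 2 ^ t + 2 ^ t * carry x y t = x % 2 ^ t + y % 2 ^ t := by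
    rw [carry, Nat.add_mod]; exact Nat.mod_add_div _ _
  have hs := congrArg (Nat.cast : ℕ → ℝ) (@Nat.mod_pow_succ (x + y) 2 j)
  have hx := congrArg (Nat.cast : ℕ → ℝ) (@Nat.mod_pow_succ x 2 j)
  have hy := congrArg (Nat.cast : ℕ → ℝ) (@Nat.mod_pow_succ y 2 j)
  have hj := congrArg (Nat.cast : ℕ → ℝ) (split_mod j)
  have hj1 := congrArg (Nat.cast : ℕ → ℝ) (split_mod (j + 1))
  push_cast at hs hx hy hj hj1
  rw [binDigit_eq_mod_two, binDigit_eq_mod_two, binDigit_eq_mod_two]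
  refine mul_left_cancel₀ (pow_ne_zero j two_ne_zero : (2 : ℝ) ^ j ≠ 0) ?_
  linear_combination -hs + hx + hy - hj + hj1

lemma max_add_one_sub_max (z : ℤ) :
    max ((z : ℝ) + 1) 0 - max (z : ℝ) 0 = if 0 ≤ z then 1 else 0 := by
  split_ifs with h
  · have hz : (0 : ℝ) ≤ z := by exact_mod_cast h
    rw [max_eq_left (by linarith), max_eq_left hz]; ring
  · have hz : (z : ℝ) + 1 ≤ 0 := by exact_mod_cast (by omega : z + 1 ≤ 0)
    rw [max_eq_right hz, max_eq_right (by linarith)]; ring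

lemma carry_eq_max_sub_max (x y t : ℕ) :
    (carry x y t : ℝ) = max (((x % 2 ^ t + y % 2 ^ t : ℕ) : ℝ) - 2 ^ t + 1) 0
      - max (((x % 2 ^ t + y % 2 ^ t : ℕ) : ℝ) - 2 ^ t) 0 := by
  rw [carry_eq_ite]
  generalize x % 2 ^ t + y % 2 ^ t = L
  have h := max_add_one_sub_max ((L : ℤ) - 2 ^ t)
  push_cast at h
  rw [h, Nat.cast_ite, Nat.cast_one, Nat.cast_zero]
  simp only [sub_nonneg]
  norm_cast

theorem Fin.sum_ite_castSucc_eq {M : Type*} [AddCommMonoid M] {d : ℕ} (F : ℕ → M)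
    (hF : F d = 0) (j : Fin (d + 1)) :
    ∑ t : Fin d, (if t.castSucc = j then F t else 0) = F j := by
  have h := Fin.sum_univ_castSucc (fun s : Fin (d + 1) => if s = j then F s else 0)
  simp only [Finset.sum_ite_eq', Finset.mem_univ, if_true, Fin.val_last, hF, ite_self,
    add_zero, Fin.val_castSucc] at h
  exact h.symm

theorem Fin.sum_ite_succ_eq {M : Type*} [AddCommMonoid M] {d : ℕ} (F : ℕ → M)
    (hF : F 0 = 0) (j : Fin (d + 1)) :
    ∑ t : Fin d, (if t.succ = j then F (t + 1) else 0) = F j := by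
  have h := Fin.sum_univ_succ (fun s : Fin (d + 1) => if s = j then F s else 0)
  simp only [Finset.sum_ite_eq', Finset.mem_univ, if_true, Fin.val_zero, hF, ite_self,
    zero_add, Fin.val_succ] at h
  exact h.symm

section ReluNet

variable {ι κ ο : Type*} [Fintype ι] [Fintype κ]

def reluNet (W₁ : Matrix κ ι ℝ) (b₁ : κ → ℝ) (W₂ : Matrix ο κ ℝ) (b₂ : ο → ℝ) (v : ι → ℝ) :
    ο → ℝ :=
  W₂ *ᵥ (fun i => max ((W₁ *ᵥ v) i + b₁ i) 0) + b₂

lemma reluNet_reindex {κ' : Type*} [Fintype κ'] (e : κ ≃ κ') (W₁ : Matrix κ ι ℝ) (b₁ : κ → ℝ)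
    (W₂ : Matrix ο κ ℝ) (b₂ : ο → ℝ) :
    reluNet (W₁.submatrix e.symm id) (b₁ ∘ e.symm) (W₂.submatrix id e.symm) b₂
      = reluNet W₁ b₁ W₂ b₂ := by
  funext v o
  simp only [reluNet, Pi.add_apply, Matrix.mulVec, dotProduct, Matrix.submatrix_apply,
    Function.comp_apply, id]
  congr 1
  exact e.symm.sum_comp (fun k => W₂ o k * max (∑ i, W₁ k i * v i + b₁ k) 0)

end ReluNet

namespace Adder

variable (d : ℕ)

/-- Hidden unit `inl i` passes on the digit sum `xᵢ + yᵢ`; the two units `inr (t, b)` are ramps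
whose difference is the carry into position `t + 1`. -/
abbrev Hidden := Fin d ⊕ Fin d × Bool

def digitWeight : Hidden d → ℕ → ℝ
  | .inl i, k => if k = i then 1 else 0
  | .inr (t, _), k => if k ≤ t then 2 ^ k else 0

def bias : Hidden d → ℝ
  | .inl _ => 0
  | .inr (t, b) => (if b then 1 else 0) - 2 ^ ((t : ℕ) + 1)

def inputWeights : Matrix (Hidden d) (Fin (2 * d)) ℝ :=
  Matrix.of fun u k => digitWeight d u (k % d)

def outputWeights : Matrix (Fin (d + 1)) (Hidden d) ℝ :=
  Matrix.of fun j u => match u with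
    | .inl i => if i.castSucc = j then 1 else 0
    | .inr (t, b) =>
      (if b then 1 else -1) * ((if t.succ = j then 1 else 0) - 2 * if t.castSucc = j then 1 else 0)

noncomputable def pairDigits (x y : ℕ) : Fin (2 * d) → ℝ :=
  fun k => if (k : ℕ) < d then binDigit x k else binDigit y ((k : ℕ) - d)

variable {d}

lemma sum_mul_pairDigits (w : ℕ → ℝ) (x y : ℕ) :
    ∑ k : Fin (2 * d), w (k % d) * pairDigits d x y k
      = ∑ i ∈ range d, w i * (binDigit x i + binDigit y i) := by
  refine (Fin.sum_univ_eq_sum_range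
    (fun k => w (k % d) * if k < d then binDigit x k else binDigit y (k - d)) (2 * d)).trans ?_
  rw [two_mul, sum_range_add, ← sum_add_distrib]
  refine sum_congr rfl fun i hi => ?_
  have hi : i < d := mem_range.mp hi
  simp [hi, Nat.mod_eq_of_lt hi, mul_add]

lemma inputWeights_mulVec (x y : ℕ) (u : Hidden d) :
    (inputWeights d *ᵥ pairDigits d x y) u
      = ∑ i ∈ range d, digitWeight d u i * (binDigit x i + binDigit y i) :=
  sum_mul_pairDigits (digitWeight d u) x y

lemma inputWeights_mulVec_inl (x y : ℕ) (i : Fin d) :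
    (inputWeights d *ᵥ pairDigits d x y) (.inl i) = binDigit x i + binDigit y i := by
  simp [inputWeights_mulVec, digitWeight]

lemma inputWeights_mulVec_inr (x y : ℕ) (t : Fin d) (b : Bool) :
    (inputWeights d *ᵥ pairDigits d x y) (.inr (t, b))
      = ((x % 2 ^ ((t : ℕ) + 1) + y % 2 ^ ((t : ℕ) + 1) : ℕ) : ℝ) := by
  have hrange : (range d).filter (· ≤ (t : ℕ)) = range ((t : ℕ) + 1) := by
    ext k; simp only [mem_filter, mem_range]; omega
  simp only [inputWeights_mulVec, digitWeight, ite_mul, zero_mul, ← sum_filter, hrange]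
  push_cast
  rw [← sum_binDigit_mul_pow, ← sum_binDigit_mul_pow, ← sum_add_distrib]
  exact sum_congr rfl fun k _ => by ring

lemma outputWeights_mulVec (h : Hidden d → ℝ) (j : Fin (d + 1)) :
    (outputWeights d *ᵥ h) j
      = ∑ i : Fin d, (if i.castSucc = j then h (.inl i) else 0)
        + (∑ t : Fin d, (if t.succ = j then h (.inr (t, true)) - h (.inr (t, false)) else 0)
          - 2 * ∑ t : Fin d,
            (if t.castSucc = j then h (.inr (t, true)) - h (.inr (t, false)) else 0)) := by
  simp only [outputWeights, Matrix.mulVec, dotProduct, Matrix.of_apply, Fintype.sum_sum_type,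
    Fintype.sum_prod_type, Fintype.sum_bool, mul_sum, ← sum_sub_distrib, ite_mul, one_mul,
    zero_mul, if_true, Bool.false_eq_true, if_false]
  congr 1
  refine sum_congr rfl fun t _ => ?_
  split_ifs <;> ring

noncomputable def activation (x y : ℕ) : Hidden d → ℝ :=
  fun u => max ((inputWeights d *ᵥ pairDigits d x y) u + bias d u) 0

lemma activation_inl (x y : ℕ) (i : Fin d) :
    activation x y (.inl i) = binDigit x i + binDigit y i := by
  rw [activation, inputWeights_mulVec_inl, bias, add_zero]
  exact max_eq_left (add_nonneg (binDigit_nonneg x i) (binDigit_nonneg y i))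

lemma activation_inr_true_sub_false (x y : ℕ) (t : Fin d) :
    activation x y (.inr (t, true)) - activation x y (.inr (t, false)) = carry x y (t + 1) := by
  simp only [activation, inputWeights_mulVec_inr, bias, if_true, Bool.false_eq_true, if_false,
    carry_eq_max_sub_max]
  ring_nf

theorem reluNet_eq_binDigit_add {x y : ℕ} (hx : x < 2 ^ d) (hy : y < 2 ^ d) :
    reluNet (inputWeights d) (bias d) (outputWeights d) 0 (pairDigits d x y)
      = fun j : Fin (d + 1) => binDigit (x + y) j := by
  funext j
  have hxy : x + y < 2 ^ (d + 1) := by rw [pow_succ]; omega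
  change (outputWeights d *ᵥ activation x y + 0) j = _
  simp only [Pi.add_apply, Pi.zero_apply, add_zero, outputWeights_mulVec, activation_inl,
    activation_inr_true_sub_false]
  rw [Fin.sum_ite_castSucc_eq (fun i => binDigit x i + binDigit y i)
      (by simp [binDigit_eq_zero_of_lt hx, binDigit_eq_zero_of_lt hy]),
    Fin.sum_ite_succ_eq (fun s => (carry x y s : ℝ)) (by simp),
    Fin.sum_ite_castSucc_eq (fun s => (carry x y (s + 1) : ℝ))
      (by simp [carry_eq_zero_of_add_lt hxy]),
    binDigit_add]
  ring

end Adder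

/-- A one-hidden-layer ReLU network with at most `8d` hidden units computing
binary addition of two `d`-bit numbers (little-endian digits), output in `d+1` bits. -/
theorem relu_network_binary_addition (d : ℕ) :
    ∃ m : ℕ, m ≤ 8 * d ∧
    ∃ (W₁ : Matrix (Fin m) (Fin (2 * d)) ℝ) (W₂ : Matrix (Fin (d + 1)) (Fin m) ℝ)
      (b₁ : Fin m → ℝ) (b₂ : Fin (d + 1) → ℝ),
      ∀ x y : ℕ, x < 2 ^ d → y < 2 ^ d → x + y < 2 ^ (d + 1) →
        (W₂ *ᵥ (fun i => max ((W₁ *ᵥ (fun k : Fin (2 * d) =>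
            if (k : ℕ) < d then binDigit x k else binDigit y ((k : ℕ) - d))) i + b₁ i) 0)
          + b₂) = fun j : Fin (d + 1) => binDigit (x + y) j := by
  let e := Fintype.equivFin (Adder.Hidden d)
  refine ⟨Fintype.card (Adder.Hidden d), by simp; omega,
    (Adder.inputWeights d).submatrix e.symm id, (Adder.outputWeights d).submatrix id e.symm,
    Adder.bias d ∘ e.symm, 0, fun x y hx hy _ => ?_⟩
  exact (congrFun (reluNet_reindex e _ _ _ _) _).trans (Adder.reluNet_eq_binDigit_add hx hy)
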